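/- arXiv:2406.05268 — 2 statements merged into one kernel-verified Lean document; each statement's English description precedes it below -/
import Mathlib

section
/- (Monge–Kantorovich) Let (X, d) be a compact metric space, let p ≥ 1, and let μ, ν be Borel probability measures on X. Then there exists a coupling π ∈ Π(μ,ν) attaining the infimum defining the optimal cost, i.e. ∫_{X×X} d(x,y)^p dπ(x,y) = inf_{σ ∈ Π(μ,ν)} ∫_{X×X} d(x,y)^p dσ(x,y). -/
/-!
Since `X × X` is compact, so is the space of probability measures on it with the topology of
weak convergence, and the couplings of `μ` and `ν` form a closed subset of it because taking
marginals is continuous. The cost `(x, y) ↦ d(x, y) ^ p` is bounded and continuous, so its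
integral is a continuous function of the coupling and attains its minimum on this compact set,
which is nonempty as it contains `μ ⊗ ν`.
-/

open MeasureTheory ENNReal

/-- A coupling of `μ` and `ν`: a Borel probability measure on `X × X` whose marginals
(pushforwards under the coordinate projections) are `μ` and `ν`. -/
def IsCoupling {X : Type*} [MeasurableSpace X] (μ ν : Measure X) (π : Measure (X × X)) : Prop :=
  IsProbabilityMeasure π ∧ π.map Prod.fst = μ ∧ π.map Prod.snd = ν

open scoped NNReal
open TopologicalSpace

lemma isClosed_setOf_map_eq {X Y : Type*} [TopologicalSpace X] [MeasurableSpace X]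
    [OpensMeasurableSpace X] [TopologicalSpace Y] [MeasurableSpace Y] [BorelSpace Y]
    [HasOuterApproxClosed Y] {f : X → Y} (hf : Continuous f) (ρ : ProbabilityMeasure Y) :
    IsClosed {σ : ProbabilityMeasure X | (σ : Measure X).map f = ρ} := by
  have h := isClosed_eq (ProbabilityMeasure.continuous_map hf) (continuous_const (y := ρ))
  simp only [← ProbabilityMeasure.toMeasure_injective.eq_iff,
    ProbabilityMeasure.toMeasure_map] at h
  exact h

section Couplings

variable {X : Type*} [MeasurableSpace X]

lemma isCoupling_prod (μ ν : Measure X) [IsProbabilityMeasure μ] [IsProbabilityMeasure ν] :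
    IsCoupling μ ν (μ.prod ν) :=
  ⟨inferInstance, by simp, by simp⟩

variable [TopologicalSpace X] [MetrizableSpace X] [BorelSpace X]

lemma isClosed_setOf_isCoupling [SecondCountableTopology X] (μ ν : Measure X)
    [IsProbabilityMeasure μ] [IsProbabilityMeasure ν] :
    IsClosed {σ : ProbabilityMeasure (X × X) | IsCoupling μ ν σ} := by
  have hset : {σ : ProbabilityMeasure (X × X) | IsCoupling μ ν σ} =
      {σ : ProbabilityMeasure (X × X) | (σ : Measure (X × X)).map Prod.fst = μ} ∩
        {σ : ProbabilityMeasure (X × X) | (σ : Measure (X × X)).map Prod.snd = ν} :=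
    Set.ext fun σ => and_iff_right inferInstance
  exact hset ▸ (isClosed_setOf_map_eq continuous_fst ⟨μ, inferInstance⟩).inter
    (isClosed_setOf_map_eq continuous_snd ⟨ν, inferInstance⟩)

theorem exists_isCoupling_lintegral_eq_iInf [CompactSpace X] (μ ν : Measure X)
    [IsProbabilityMeasure μ] [IsProbabilityMeasure ν] (c : C(X × X, ℝ≥0)) :
    ∃ π, IsCoupling μ ν π ∧
      ∫⁻ z, c z ∂π = ⨅ (σ : Measure (X × X)) (_ : IsCoupling μ ν σ), ∫⁻ z, c z ∂σ := by
  obtain ⟨π, hπ, hmin⟩ := (isClosed_setOf_isCoupling μ ν).isCompact.exists_isMinOn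
    ⟨⟨μ.prod ν, inferInstance⟩, isCoupling_prod μ ν⟩
    (ProbabilityMeasure.continuous_lintegral_continuousMap c).continuousOn
  refine ⟨π, hπ, le_antisymm (le_iInf₂ fun σ hσ => ?_) (iInf₂_le (π : Measure (X × X)) hπ)⟩
  exact hmin (a := ⟨σ, hσ.1⟩) hσ

end Couplings

/-- Monge–Kantorovich: on a compact metric space, for `p ≥ 1` and Borel
probability measures `μ`, `ν`, there is a coupling attaining the infimum defining the
optimal transport cost. -/
theorem exists_optimal_coupling {X : Type*} [MetricSpace X] [CompactSpace X]
    [MeasurableSpace X] [BorelSpace X] (p : ℝ) (hp : 1 ≤ p)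
    (μ ν : Measure X) [IsProbabilityMeasure μ] [IsProbabilityMeasure ν] :
    ∃ π : Measure (X × X), IsCoupling μ ν π ∧
      ∫⁻ z, ENNReal.ofReal (dist z.1 z.2 ^ p) ∂π =
        ⨅ (σ : Measure (X × X)) (_ : IsCoupling μ ν σ),
          ∫⁻ z, ENNReal.ofReal (dist z.1 z.2 ^ p) ∂σ :=
  exists_isCoupling_lintegral_eq_iInf μ ν ⟨fun z => (dist z.1 z.2 ^ p).toNNReal,
    continuous_real_toNNReal.comp
      ((Real.continuous_rpow_const (zero_le_one.trans hp)).comp continuous_dist)⟩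
end

section
/- Let E be a finite-dimensional real inner product space and let ψ : ℝ × E → ℝ be twice continuously differentiable, writing ∇ψ_t(x) for the gradient of x ↦ ψ(t,x). Suppose ψ solves the Hamilton–Jacobi equation ∂_t ψ(t,x) + (1/2)‖∇ψ_t(x)‖² = 0 for all (t,x) ∈ ℝ × E, and let γ : ℝ → E be a differentiable curve with γ'(t) = ∇ψ_t(γ(t)) for all t. Then the velocity t ↦ ∇ψ_t(γ(t)) is constant in t, and consequently γ(t) = γ(0) + t · ∇ψ_0(γ(0)) for all t ∈ ℝ. (This is the characteristics formulation of the geodesic equation ∂ψ_t/∂t + (1/2)|∇ψ_t|² = 0 for geodesics of the Wasserstein space.) -/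
/-!
Differentiating the Hamilton–Jacobi equation in `q = (t, x)` gives `D²ψ(q) h (1, ∇ψ(q)) = 0`
for every direction `h`. By symmetry of the second derivative this says `D²ψ(q) (1, ∇ψ(q)) = 0`,
i.e. the gradient does not change along the vector field `(1, ∇ψ)`. A curve with `γ' = ∇ψ_t(γ)`
moves along exactly that field, so its velocity is constant and the curve is a straight line.
-/

open scoped RealInnerProductSpace
open ContinuousLinearMap

theorem hasFDerivAt_fderiv_of_contDiff_two {E F : Type*} [NormedAddCommGroup E] [NormedSpace ℝ E]
    [NormedAddCommGroup F] [NormedSpace ℝ F] {f : E → F} (hf : ContDiff ℝ 2 f) (x : E) :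
    HasFDerivAt (fderiv ℝ f) (fderiv ℝ (fderiv ℝ f) x) x :=
  ((hf.fderiv_right (m := 1) le_rfl).differentiable one_ne_zero x).hasFDerivAt

theorem deriv_slice_eq_fderiv_apply {E F : Type*} [NormedAddCommGroup E] [NormedSpace ℝ E]
    [NormedAddCommGroup F] [NormedSpace ℝ F] {ψ : ℝ × E → F} {t : ℝ} {x : E}
    (hψ : DifferentiableAt ℝ ψ (t, x)) :
    deriv (fun s => ψ (s, x)) t = fderiv ℝ ψ (t, x) (1, 0) :=
  (hψ.hasFDerivAt.comp_hasDerivAt t ((hasDerivAt_id t).prodMk (hasDerivAt_const t x))).deriv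

theorem eq_add_smul_of_forall_hasDerivAt {F : Type*} [NormedAddCommGroup F] [NormedSpace ℝ F]
    {f : ℝ → F} {c : F} (hf : ∀ t, HasDerivAt f c t) (t : ℝ) : f t = f 0 + t • c := by
  have hdiff : ∀ s, HasDerivAt (fun s => f s - s • c) 0 s := fun s =>
    ((hf s).sub ((hasDerivAt_id' s).smul_const c)).congr_deriv (by rw [one_smul, sub_self])
  have hconst := is_const_of_deriv_eq_zero (fun s => (hdiff s).differentiableAt)
    (fun s => (hdiff s).deriv) t 0
  rw [zero_smul, sub_zero] at hconst
  exact sub_eq_iff_eq_add.mp hconst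

section

variable {E : Type*} [NormedAddCommGroup E] [InnerProductSpace ℝ E] [CompleteSpace E]

/-- For `L = Dψ(t, x)` this is the spatial gradient `∇ψ_t(x)`: the Riesz representative of the
restriction of `L` to `{0} × E`. -/
noncomputable def spatialGradient : ((ℝ × E) →L[ℝ] ℝ) →L[ℝ] E :=
  (InnerProductSpace.toDual ℝ E).symm.toContinuousLinearEquiv.toContinuousLinearMap ∘L
    (compL ℝ E (ℝ × E) ℝ).flip (inr ℝ ℝ E)

theorem inner_spatialGradient_left (L : (ℝ × E) →L[ℝ] ℝ) (w : E) :
    ⟪spatialGradient L, w⟫ = L (0, w) :=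
  InnerProductSpace.toDual_symm_apply

theorem gradient_slice_eq_spatialGradient {ψ : ℝ × E → ℝ} {t : ℝ} {x : E}
    (hψ : DifferentiableAt ℝ ψ (t, x)) :
    gradient (fun y => ψ (t, y)) x = spatialGradient (fderiv ℝ ψ (t, x)) :=
  (hψ.hasFDerivAt.comp x (hasFDerivAt_prodMk_right t x)).hasGradientAt.gradient

variable {ψ : ℝ × E → ℝ}

theorem fderiv_fderiv_apply_apply_one_spatialGradient_eq_zero (hψ : ContDiff ℝ 2 ψ)
    (hHJ : ∀ q, fderiv ℝ ψ q (1, 0) + 1 / 2 * ‖spatialGradient (fderiv ℝ ψ q)‖ ^ 2 = 0)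
    (q h : ℝ × E) :
    fderiv ℝ (fderiv ℝ ψ) q h (1, spatialGradient (fderiv ℝ ψ q)) = 0 := by
  have hD2 := hasFDerivAt_fderiv_of_contDiff_two hψ q
  have hH : HasFDerivAt
      (fun q => fderiv ℝ ψ q (1, 0) + 1 / 2 * ‖spatialGradient (fderiv ℝ ψ q)‖ ^ 2)
      ((apply ℝ ℝ ((1 : ℝ), (0 : E))).comp (fderiv ℝ (fderiv ℝ ψ) q) + (1 / 2 : ℝ) •
        (2 • (innerSL ℝ (spatialGradient (fderiv ℝ ψ q))).comp
          (spatialGradient.comp (fderiv ℝ (fderiv ℝ ψ) q)))) q :=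
    ((apply ℝ ℝ ((1 : ℝ), (0 : E)) : ((ℝ × E) →L[ℝ] ℝ) →L[ℝ] ℝ).hasFDerivAt.comp
      (f := fderiv ℝ ψ) q hD2).add
      ((spatialGradient.hasFDerivAt.comp (f := fderiv ℝ ψ) q hD2).norm_sq.const_mul (1 / 2 : ℝ))
  have hH0 : HasFDerivAt
      (fun q => fderiv ℝ ψ q (1, 0) + 1 / 2 * ‖spatialGradient (fderiv ℝ ψ q)‖ ^ 2)
      (0 : (ℝ × E) →L[ℝ] ℝ) q := by
    simpa only [hHJ] using hasFDerivAt_const (0 : ℝ) q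
  have hzero := congrArg (· h) (hH.unique hH0)
  simp only [add_apply, comp_apply, apply_apply, smul_apply, innerSL_apply_apply, zero_apply]
    at hzero
  rw [real_inner_comm, inner_spatialGradient_left] at hzero
  have hsplit : ((1 : ℝ), spatialGradient (fderiv ℝ ψ q))
      = (1, 0) + (0, spatialGradient (fderiv ℝ ψ q)) := by simp
  rw [hsplit, map_add]
  linear_combination hzero

theorem fderiv_fderiv_apply_one_spatialGradient_eq_zero (hψ : ContDiff ℝ 2 ψ)
    (hHJ : ∀ q, fderiv ℝ ψ q (1, 0) + 1 / 2 * ‖spatialGradient (fderiv ℝ ψ q)‖ ^ 2 = 0)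
    (q : ℝ × E) :
    fderiv ℝ (fderiv ℝ ψ) q (1, spatialGradient (fderiv ℝ ψ q)) = 0 :=
  ContinuousLinearMap.ext fun h => by
    rw [(hψ.contDiffAt.isSymmSndFDerivAt (by simp)).eq, zero_apply]
    exact fderiv_fderiv_apply_apply_one_spatialGradient_eq_zero hψ hHJ q h

theorem hasDerivAt_spatialGradient_fderiv_comp_curve {γ : ℝ → E} {v : E} {t : ℝ}
    (hψ : ContDiff ℝ 2 ψ) (hγ : HasDerivAt γ v t) :
    HasDerivAt (fun s => spatialGradient (fderiv ℝ ψ (s, γ s)))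
      (spatialGradient (fderiv ℝ (fderiv ℝ ψ) (t, γ t) (1, v))) t :=
  (spatialGradient (E := E)).hasFDerivAt.comp_hasDerivAt (f := fun s => fderiv ℝ ψ (s, γ s)) t
    ((hasFDerivAt_fderiv_of_contDiff_two hψ _).comp_hasDerivAt (l := fderiv ℝ ψ) t
      ((hasDerivAt_id' t).prodMk hγ))

theorem spatialGradient_fderiv_comp_curve_eq (hψ : ContDiff ℝ 2 ψ)
    (hHJ : ∀ q, fderiv ℝ ψ q (1, 0) + 1 / 2 * ‖spatialGradient (fderiv ℝ ψ q)‖ ^ 2 = 0)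
    {γ : ℝ → E} (hγ : ∀ t, HasDerivAt γ (spatialGradient (fderiv ℝ ψ (t, γ t))) t) (s t : ℝ) :
    spatialGradient (fderiv ℝ ψ (s, γ s)) = spatialGradient (fderiv ℝ ψ (t, γ t)) := by
  have hv : ∀ t, HasDerivAt (fun s => spatialGradient (fderiv ℝ ψ (s, γ s))) 0 t := fun t => by
    simpa only [fderiv_fderiv_apply_one_spatialGradient_eq_zero hψ hHJ, map_zero] using
      hasDerivAt_spatialGradient_fderiv_comp_curve hψ (hγ t)
  exact is_const_of_deriv_eq_zero (fun t => (hv t).differentiableAt) (fun t => (hv t).deriv) s t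

end

/-- if `ψ` solves the Hamilton–Jacobi equation
`∂_t ψ + (1/2)‖∇ψ_t‖² = 0` and `γ` is an integral curve of the time-dependent gradient
field, `γ'(t) = ∇ψ_t(γ(t))`, then the velocity `t ↦ ∇ψ_t(γ(t))` is constant and
`γ(t) = γ(0) + t ∇ψ₀(γ(0))`. This is the characteristics formulation of the geodesic
equation `∂ψ_t/∂t + (1/2)|∇ψ_t|² = 0` on Wasserstein space. -/
theorem hamilton_jacobi_characteristics
    {E : Type*} [NormedAddCommGroup E] [InnerProductSpace ℝ E] [FiniteDimensional ℝ E]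
    (ψ : ℝ × E → ℝ) (hψ : ContDiff ℝ 2 ψ)
    (hHJ : ∀ t : ℝ, ∀ x : E,
      deriv (fun s => ψ (s, x)) t + (1 / 2) * ‖gradient (fun y => ψ (t, y)) x‖ ^ 2 = 0)
    (γ : ℝ → E) (hγ : ∀ t : ℝ, HasDerivAt γ (gradient (fun y => ψ (t, y)) (γ t)) t) :
    (∀ s t : ℝ, gradient (fun y => ψ (s, y)) (γ s) = gradient (fun y => ψ (t, y)) (γ t)) ∧
    ∀ t : ℝ, γ t = γ 0 + t • gradient (fun y => ψ (0, y)) (γ 0) := by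
  have hdiff : Differentiable ℝ ψ := hψ.differentiable two_ne_zero
  have hgrad : ∀ t x, gradient (fun y => ψ (t, y)) x = spatialGradient (fderiv ℝ ψ (t, x)) :=
    fun t x => gradient_slice_eq_spatialGradient (hdiff _)
  have hHJ' : ∀ q, fderiv ℝ ψ q (1, 0) + 1 / 2 * ‖spatialGradient (fderiv ℝ ψ q)‖ ^ 2 = 0 :=
    fun (t, x) => by simpa only [deriv_slice_eq_fderiv_apply (hdiff _), hgrad] using hHJ t x
  simp only [hgrad] at hγ ⊢
  have hconst := spatialGradient_fderiv_comp_curve_eq hψ hHJ' hγ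
  exact ⟨hconst, eq_add_smul_of_forall_hasDerivAt fun t => hconst 0 t ▸ hγ t⟩
end
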